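/- (Lemma 1, Lipschitz part, coupling form.) Let U : ℝ^d → ℝ be differentiable with ∇U globally Lipschitz; let ξ : ℝ^d → ℝ^m be twice continuously differentiable with ∇ξ bounded and ∇²ξ bounded (equivalently, ∇ξ Lipschitz); let φ : ℝ^m → ℝ be twice continuously differentiable with φ, ∇φ, ∇²φ bounded; let γ, α, β, ε, τ > 0, and set h = log ∘ K_{τ,ε} with K_{τ,ε}(r) = ε + τ log(1 + exp(r/τ)). Define the drift b(x, μ) = −γ⁻¹ [ ∇U(x) + (α/β) ∇ξ(x)ᵀ h'(f_μ(ξ(x))) ∇f_μ(ξ(x)) ], where f_μ(z) = ∫ φ(z − ξ(y)) dμ(y). Then there exists a constant C > 0 such that for all x₁, x₂ ∈ ℝ^d, all probability measures μ₁, μ₂ on ℝ^d with finite second moment, and every coupling π of μ₁ and μ₂, ‖b(x₁, μ₁) − b(x₂, μ₂)‖ ≤ C ( ‖x₁ − x₂‖ + (∫ ‖y₁ − y₂‖² dπ(y₁, y₂))^{1/2} ). -/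

import Mathlib

/-!
The drift is built from `∇U`, `∇ξ`, the scalar `h' ∘ f_μ ∘ ξ` and the vector `∇f_μ ∘ ξ` by sums,
scalar multiplications and applications of linear maps, so it suffices that every factor is bounded
and Lipschitz in `(x, μ)`. For `h' = σ(·/τ) / K_{τ,ε}` this follows from `K_{τ,ε} ≥ ε` and the
1-Lipschitz continuity of the sigmoid `σ` and of `K_{τ,ε}`. For the mean-field terms
`∫ Φ(ξ x - ξ y) dμ(y)` with `Φ = φ` or `Φ = ∇φ`, both integrals can be read off the coupling `π`,
which bounds their difference by `Lip Φ · Lip ξ · (‖x₁ - x₂‖ + ∫ ‖y₁ - y₂‖ dπ)`; Jensen's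
inequality then replaces the first moment of `‖y₁ - y₂‖` under `π` by the square root of its
second moment.
-/

open MeasureTheory NNReal

namespace Real

noncomputable def softplus (x : ℝ) : ℝ := log (1 + exp x)

lemma hasDerivAt_softplus (x : ℝ) : HasDerivAt softplus (sigmoid x) x := by
  refine (((hasDerivAt_exp x).const_add 1).log (by positivity)).congr_deriv ?_
  rw [sigmoid_def, exp_neg]
  field_simp
  ring

lemma softplus_nonneg (x : ℝ) : 0 ≤ softplus x :=
  log_nonneg (by linarith [exp_pos x])

lemma lipschitzWith_sigmoid : LipschitzWith 1 sigmoid :=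
  lipschitzWith_of_nnnorm_deriv_le differentiable_sigmoid fun x => by
    have h₀ := sigmoid_nonneg x
    have h₁ := sigmoid_le_one x
    rw [deriv_sigmoid, ← NNReal.coe_le_coe, coe_nnnorm, NNReal.coe_one,
      norm_of_nonneg (mul_nonneg h₀ (by linarith))]
    nlinarith

end Real

lemma LipschitzWith.of_norm_sub_le' {E F : Type*} [SeminormedAddCommGroup E]
    [SeminormedAddCommGroup F] {f : E → F} {K : ℝ} (h : ∀ x y, ‖f x - f y‖ ≤ K * ‖x - y‖) :
    LipschitzWith K.toNNReal f :=
  .of_dist_le' (by simpa only [dist_eq_norm] using h)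

lemma lipschitzWith_of_norm_fderiv_le {E F : Type*} [NormedAddCommGroup E] [NormedSpace ℝ E]
    [NormedAddCommGroup F] [NormedSpace ℝ F] {f : E → F} (hf : Differentiable ℝ f) {C : ℝ}
    (h : ∀ x, ‖fderiv ℝ f x‖ ≤ C) : LipschitzWith C.toNNReal f :=
  lipschitzWith_of_nnnorm_fderiv_le hf fun x => by
    rw [← NNReal.coe_le_coe, coe_nnnorm]
    exact (h x).trans (Real.le_coe_toNNReal C)

lemma lipschitzWith_of_norm_gradient_le {F : Type*} [NormedAddCommGroup F]
    [InnerProductSpace ℝ F] [CompleteSpace F] {f : F → ℝ} (hf : Differentiable ℝ f) {C : ℝ}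
    (h : ∀ x, ‖gradient f x‖ ≤ C) : LipschitzWith C.toNNReal f :=
  lipschitzWith_of_norm_fderiv_le hf fun x =>
    ((InnerProductSpace.toDual ℝ F).symm.norm_map _).symm.trans_le (h x)

lemma LipschitzWith.div_of_le {α : Type*} [PseudoMetricSpace α] {f g : α → ℝ} {Kf Kg : ℝ≥0}
    {A ε : ℝ} (hf : LipschitzWith Kf f) (hg : LipschitzWith Kg g) (hfA : ∀ x, |f x| ≤ A)
    (hε : 0 < ε) (hgε : ∀ x, ε ≤ g x) :
    LipschitzWith (Kf / ε + A * Kg / ε ^ 2).toNNReal (fun x => f x / g x) := by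
  refine LipschitzWith.of_dist_le' fun x y => ?_
  have hgx := hε.trans_le (hgε x)
  have hgy := hε.trans_le (hgε y)
  have hdf : |f x - f y| ≤ Kf * dist x y := by simpa [Real.dist_eq] using hf.dist_le_mul x y
  have hdg : |g y - g x| ≤ Kg * dist x y := by
    simpa [Real.dist_eq, abs_sub_comm] using hg.dist_le_mul x y
  have hA : 0 ≤ A := (abs_nonneg _).trans (hfA x)
  have hsplit : f x / g x - f y / g y = (f x - f y) / g x + f y * (g y - g x) / (g x * g y) := by
    field_simp; ring
  rw [Real.dist_eq, hsplit]
  calc |(f x - f y) / g x + f y * (g y - g x) / (g x * g y)|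
      ≤ |f x - f y| / g x + |f y| * |g y - g x| / (g x * g y) := by
        refine (abs_add_le _ _).trans_eq ?_
        rw [abs_div, abs_div, abs_mul, abs_of_pos hgx, abs_of_pos (mul_pos hgx hgy)]
    _ ≤ Kf * dist x y / ε + A * (Kg * dist x y) / (ε * ε) := by
        gcongr <;> first | exact hgε _ | exact hfA _
    _ = (Kf / ε + A * Kg / ε ^ 2) * dist x y := by ring

section SoftplusRegularizer

open Real

/-- The Softplus regularizer `K_{τ,ε}`. -/
noncomputable def softplusRegularizer (ε τ r : ℝ) : ℝ := ε + τ * softplus (r / τ)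

variable {ε τ : ℝ}

lemma le_softplusRegularizer (hτ : 0 ≤ τ) (r : ℝ) : ε ≤ softplusRegularizer ε τ r :=
  le_add_of_nonneg_right (mul_nonneg hτ (softplus_nonneg _))

lemma hasDerivAt_softplusRegularizer (hτ : τ ≠ 0) (r : ℝ) :
    HasDerivAt (softplusRegularizer ε τ) (sigmoid (r / τ)) r := by
  refine ((((hasDerivAt_softplus (r / τ)).comp r
    ((hasDerivAt_id r).div_const τ)).const_mul τ).const_add ε).congr_deriv ?_
  field_simp

lemma lipschitzWith_softplusRegularizer (hτ : τ ≠ 0) :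
    LipschitzWith 1 (softplusRegularizer ε τ) :=
  lipschitzWith_of_nnnorm_deriv_le (fun r => (hasDerivAt_softplusRegularizer hτ r).differentiableAt)
    fun r => by
      rw [(hasDerivAt_softplusRegularizer hτ r).deriv, ← NNReal.coe_le_coe, coe_nnnorm,
        norm_of_nonneg (sigmoid_nonneg _)]
      exact sigmoid_le_one _

lemma deriv_log_softplusRegularizer (hε : 0 < ε) (hτ : 0 < τ) :
    (deriv fun r => log (softplusRegularizer ε τ r))
      = fun r => sigmoid (r / τ) / softplusRegularizer ε τ r :=
  funext fun r => ((hasDerivAt_softplusRegularizer hτ.ne' r).log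
    (hε.trans_le (le_softplusRegularizer hτ.le r)).ne').deriv

lemma abs_deriv_log_softplusRegularizer_le (hε : 0 < ε) (hτ : 0 < τ) (r : ℝ) :
    |deriv (fun r => log (softplusRegularizer ε τ r)) r| ≤ ε⁻¹ := by
  have hK := le_softplusRegularizer (ε := ε) hτ.le r
  rw [deriv_log_softplusRegularizer hε hτ,
    abs_of_nonneg (div_nonneg (sigmoid_nonneg _) (hε.le.trans hK)), ← one_div]
  exact div_le_div₀ zero_le_one (sigmoid_le_one _) hε hK

lemma lipschitzWith_deriv_log_softplusRegularizer (hε : 0 < ε) (hτ : 0 < τ) :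
    LipschitzWith (τ⁻¹ / ε + 1 / ε ^ 2).toNNReal
      (deriv fun r => log (softplusRegularizer ε τ r)) := by
  have hσ : LipschitzWith ‖τ⁻¹‖₊ (fun r => sigmoid (r / τ)) := by
    simpa only [div_eq_inv_mul, one_mul, Function.comp_def, smul_eq_mul] using
      lipschitzWith_sigmoid.comp (lipschitzWith_smul τ⁻¹)
  have h := hσ.div_of_le (lipschitzWith_softplusRegularizer hτ.ne')
    (fun r => by rw [abs_of_nonneg (sigmoid_nonneg _)]; exact sigmoid_le_one _) hε
    (le_softplusRegularizer hτ.le)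
  rw [coe_nnnorm, Real.norm_of_nonneg (inv_nonneg.2 hτ.le), NNReal.coe_one, one_mul] at h
  rwa [deriv_log_softplusRegularizer hε hτ]

end SoftplusRegularizer

section Products

variable {E F : Type*} [SeminormedAddCommGroup E] [NormedSpace ℝ E]
  [SeminormedAddCommGroup F] [NormedSpace ℝ F]

lemma norm_smul_sub_smul_le (s₁ s₂ : ℝ) (v₁ v₂ : F) :
    ‖s₁ • v₁ - s₂ • v₂‖ ≤ |s₁ - s₂| * ‖v₁‖ + |s₂| * ‖v₁ - v₂‖ := by
  rw [show s₁ • v₁ - s₂ • v₂ = (s₁ - s₂) • v₁ + s₂ • (v₁ - v₂) by module]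
  refine (norm_add_le _ _).trans_eq ?_
  rw [norm_smul, norm_smul, Real.norm_eq_abs, Real.norm_eq_abs]

lemma ContinuousLinearMap.norm_apply_sub_apply_le (B₁ B₂ : F →L[ℝ] E) (u₁ u₂ : F) :
    ‖B₁ u₁ - B₂ u₂‖ ≤ ‖B₁ - B₂‖ * ‖u₁‖ + ‖B₂‖ * ‖u₁ - u₂‖ := by
  rw [show B₁ u₁ - B₂ u₂ = (B₁ - B₂) u₁ + B₂ (u₁ - u₂) by simp]
  exact (norm_add_le _ _).trans (add_le_add ((B₁ - B₂).le_opNorm u₁) (B₂.le_opNorm _))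

end Products

lemma norm_drift_sub_le {E F : Type*} [NormedAddCommGroup E] [InnerProductSpace ℝ E]
    [CompleteSpace E] [NormedAddCommGroup F] [InnerProductSpace ℝ F] [CompleteSpace F]
    (γ a : ℝ) (g₁ g₂ : E) (A₁ A₂ : E →L[ℝ] F) (s₁ s₂ : ℝ) (v₁ v₂ : F)
    {T LU LB MB S Ls V Lv : ℝ} (hg : ‖g₁ - g₂‖ ≤ LU * T) (hA : ‖A₁ - A₂‖ ≤ LB * T)
    (hA₂ : ‖A₂‖ ≤ MB) (hs₁ : |s₁| ≤ S) (hs₂ : |s₂| ≤ S) (hs : |s₁ - s₂| ≤ Ls * T)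
    (hv₁ : ‖v₁‖ ≤ V) (hv : ‖v₁ - v₂‖ ≤ Lv * T) :
    ‖-(γ⁻¹) • (g₁ + a • A₁.adjoint (s₁ • v₁)) - -(γ⁻¹) • (g₂ + a • A₂.adjoint (s₂ • v₂))‖
      ≤ |γ⁻¹| * (LU + |a| * (LB * (S * V) + MB * (Ls * V + S * Lv))) * T := by
  set B₁ := A₁.adjoint
  set B₂ := A₂.adjoint
  have hB : ‖B₁ - B₂‖ ≤ LB * T := by rwa [← map_sub, LinearIsometryEquiv.norm_map]
  have hB₂ : ‖B₂‖ ≤ MB := by rwa [LinearIsometryEquiv.norm_map]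
  have hS : 0 ≤ S := (abs_nonneg _).trans hs₁
  have hLBT : 0 ≤ LB * T := (norm_nonneg _).trans hB
  have hLsT : 0 ≤ Ls * T := (abs_nonneg _).trans hs
  have hMB : 0 ≤ MB := (norm_nonneg _).trans hB₂
  have hsv₁ : ‖s₁ • v₁‖ ≤ S * V := by
    rw [norm_smul, Real.norm_eq_abs]; exact mul_le_mul hs₁ hv₁ (norm_nonneg _) hS
  have hsv : ‖s₁ • v₁ - s₂ • v₂‖ ≤ Ls * T * V + S * (Lv * T) :=
    (norm_smul_sub_smul_le s₁ s₂ v₁ v₂).trans (add_le_add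
      (mul_le_mul hs hv₁ (norm_nonneg _) hLsT) (mul_le_mul hs₂ hv (norm_nonneg _) hS))
  have hBsv : ‖B₁ (s₁ • v₁) - B₂ (s₂ • v₂)‖
      ≤ LB * T * (S * V) + MB * (Ls * T * V + S * (Lv * T)) :=
    (B₁.norm_apply_sub_apply_le B₂ _ _).trans (add_le_add
      (mul_le_mul hB hsv₁ (norm_nonneg _) hLBT) (mul_le_mul hB₂ hsv (norm_nonneg _) hMB))
  calc ‖-(γ⁻¹) • (g₁ + a • B₁ (s₁ • v₁)) - -(γ⁻¹) • (g₂ + a • B₂ (s₂ • v₂))‖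
      = |γ⁻¹| * ‖(g₁ - g₂) + a • (B₁ (s₁ • v₁) - B₂ (s₂ • v₂))‖ := by
        rw [← abs_neg, ← Real.norm_eq_abs, ← norm_smul, ← smul_sub]; congr 2; module
    _ ≤ |γ⁻¹| * (LU * T + |a| * (LB * T * (S * V) + MB * (Ls * T * V + S * (Lv * T)))) := by
        gcongr
        refine (norm_add_le _ _).trans (add_le_add hg ?_)
        rw [norm_smul, Real.norm_eq_abs]
        gcongr
    _ = |γ⁻¹| * (LU + |a| * (LB * (S * V) + MB * (Ls * V + S * Lv))) * T := by ring

lemma integral_le_sqrt_integral_sq {Ω : Type*} [MeasurableSpace Ω] {μ : Measure Ω}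
    [IsProbabilityMeasure μ] {g : Ω → ℝ} (hg : MemLp g 2 μ) :
    ∫ x, g x ∂μ ≤ √(∫ x, g x ^ 2 ∂μ) := by
  have hvar := ProbabilityTheory.variance_eq_sub hg ▸ ProbabilityTheory.variance_nonneg g μ
  exact (le_abs_self _).trans (Real.abs_le_sqrt (by simpa using hvar))

section Coupling

variable {E F G : Type*} [MeasurableSpace E] [NormedAddCommGroup G] [NormedSpace ℝ G]
  {μ₁ μ₂ : Measure E} {π : Measure (E × E)}

lemma integral_sub_integral_eq_integral_of_coupling (h₁ : π.map Prod.fst = μ₁)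
    (h₂ : π.map Prod.snd = μ₂) {g₁ g₂ : E → G} (hg₁ : Integrable g₁ μ₁) (hg₂ : Integrable g₂ μ₂) :
    ∫ y, g₁ y ∂μ₁ - ∫ y, g₂ y ∂μ₂ = ∫ p, g₁ p.1 - g₂ p.2 ∂π := by
  subst h₁ h₂
  rw [integral_map measurable_fst.aemeasurable hg₁.1, integral_map measurable_snd.aemeasurable hg₂.1]
  exact (integral_sub ((integrable_map_measure hg₁.1 measurable_fst.aemeasurable).1 hg₁)
    ((integrable_map_measure hg₂.1 measurable_snd.aemeasurable).1 hg₂)).symm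

variable [NormedAddCommGroup E]

lemma norm_integral_sub_integral_le_of_coupling [IsProbabilityMeasure π]
    (h₁ : π.map Prod.fst = μ₁) (h₂ : π.map Prod.snd = μ₂) {g₁ g₂ : E → G}
    (hg₁ : Integrable g₁ μ₁) (hg₂ : Integrable g₂ μ₂)
    (hd : Integrable (fun p => ‖p.1 - p.2‖) π) {c K : ℝ}
    (hbound : ∀ y₁ y₂, ‖g₁ y₁ - g₂ y₂‖ ≤ c + K * ‖y₁ - y₂‖) :
    ‖∫ y, g₁ y ∂μ₁ - ∫ y, g₂ y ∂μ₂‖ ≤ c + K * ∫ p, ‖p.1 - p.2‖ ∂π := by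
  rw [integral_sub_integral_eq_integral_of_coupling h₁ h₂ hg₁ hg₂]
  calc ‖∫ p, g₁ p.1 - g₂ p.2 ∂π‖ ≤ ∫ p, c + K * ‖p.1 - p.2‖ ∂π :=
        norm_integral_le_of_norm_le ((integrable_const c).add (hd.const_mul K))
          (ae_of_all _ fun p => hbound p.1 p.2)
    _ = c + K * ∫ p, ‖p.1 - p.2‖ ∂π := by
        rw [integral_add (integrable_const c) (hd.const_mul K), integral_const_mul]
        simp

variable [NormedAddCommGroup F] [OpensMeasurableSpace E] [SecondCountableTopologyEither E G]

lemma norm_integral_comp_sub_sub_le_of_coupling [IsProbabilityMeasure π]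
    (h₁ : π.map Prod.fst = μ₁) (h₂ : π.map Prod.snd = μ₂)
    (hd : Integrable (fun p => ‖p.1 - p.2‖) π) {Φ : F → G} {KΦ Kξ : ℝ≥0}
    (hΦ : LipschitzWith KΦ Φ) (hΦ_bdd : ∃ C, ∀ w, ‖Φ w‖ ≤ C) {ξ : E → F}
    (hξ : LipschitzWith Kξ ξ) (x₁ x₂ : E) :
    ‖∫ y, Φ (ξ x₁ - ξ y) ∂μ₁ - ∫ y, Φ (ξ x₂ - ξ y) ∂μ₂‖
      ≤ KΦ * Kξ * (‖x₁ - x₂‖ + ∫ p, ‖p.1 - p.2‖ ∂π) := by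
  obtain ⟨C, hC⟩ := hΦ_bdd
  have hint (x : E) (μ : Measure E) [IsFiniteMeasure μ] :
      Integrable (fun y => Φ (ξ x - ξ y)) μ :=
    .of_bound (hΦ.continuous.comp (continuous_const.sub hξ.continuous)).aestronglyMeasurable C
      (ae_of_all _ fun y => hC _)
  subst h₁ h₂
  refine (norm_integral_sub_integral_le_of_coupling rfl rfl (hint x₁ _) (hint x₂ _) hd
    (c := KΦ * Kξ * ‖x₁ - x₂‖) (K := KΦ * Kξ) fun y₁ y₂ => ?_).trans_eq (by ring)
  calc ‖Φ (ξ x₁ - ξ y₁) - Φ (ξ x₂ - ξ y₂)‖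
      ≤ KΦ * ‖(ξ x₁ - ξ x₂) - (ξ y₁ - ξ y₂)‖ := by
        rw [show (ξ x₁ - ξ x₂) - (ξ y₁ - ξ y₂) = (ξ x₁ - ξ y₁) - (ξ x₂ - ξ y₂) by abel]
        exact hΦ.norm_sub_le _ _
    _ ≤ KΦ * (Kξ * ‖x₁ - x₂‖ + Kξ * ‖y₁ - y₂‖) := by
        gcongr
        exact (norm_sub_le _ _).trans (add_le_add (hξ.norm_sub_le _ _) (hξ.norm_sub_le _ _))
    _ = KΦ * Kξ * ‖x₁ - x₂‖ + KΦ * Kξ * ‖y₁ - y₂‖ := by ring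

lemma norm_integral_comp_sub_sub_le_sqrt_of_coupling [IsProbabilityMeasure π]
    (h₁ : π.map Prod.fst = μ₁) (h₂ : π.map Prod.snd = μ₂)
    (hd : MemLp (fun p => ‖p.1 - p.2‖) 2 π) {Φ : F → G} {KΦ Kξ : ℝ≥0}
    (hΦ : LipschitzWith KΦ Φ) (hΦ_bdd : ∃ C, ∀ w, ‖Φ w‖ ≤ C) {ξ : E → F}
    (hξ : LipschitzWith Kξ ξ) (x₁ x₂ : E) :
    ‖∫ y, Φ (ξ x₁ - ξ y) ∂μ₁ - ∫ y, Φ (ξ x₂ - ξ y) ∂μ₂‖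
      ≤ KΦ * Kξ * (‖x₁ - x₂‖ + √(∫ p, ‖p.1 - p.2‖ ^ 2 ∂π)) := by
  refine (norm_integral_comp_sub_sub_le_of_coupling h₁ h₂ (hd.integrable one_le_two) hΦ hΦ_bdd
    hξ x₁ x₂).trans ?_
  gcongr
  exact integral_le_sqrt_integral_sq hd

end Coupling

theorem drift_lipschitz_coupling_form_general
    (d m : ℕ) (γ α β ε τ : ℝ)
    (hε : 0 < ε) (hτ : 0 < τ)
    (U : EuclideanSpace ℝ (Fin d) → ℝ)
    (hU_lip : ∃ L : ℝ, ∀ x₁ x₂, ‖gradient U x₁ - gradient U x₂‖ ≤ L * ‖x₁ - x₂‖)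
    (ξ : EuclideanSpace ℝ (Fin d) → EuclideanSpace ℝ (Fin m))
    (hξ : ContDiff ℝ 2 ξ)
    (hξ_bdd : ∃ M : ℝ, ∀ x, ‖fderiv ℝ ξ x‖ ≤ M)
    (hξ_lip : ∃ L : ℝ, ∀ x₁ x₂, ‖fderiv ℝ ξ x₁ - fderiv ℝ ξ x₂‖ ≤ L * ‖x₁ - x₂‖)
    (φ : EuclideanSpace ℝ (Fin m) → ℝ)
    (hφ : ContDiff ℝ 2 φ)
    (hφ_bdd : ∃ C : ℝ, ∀ w, |φ w| ≤ C)
    (hφ_grad_bdd : ∃ C : ℝ, ∀ w, ‖gradient φ w‖ ≤ C)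
    (hφ_grad_lip : ∃ C : ℝ, ∀ w₁ w₂, ‖gradient φ w₁ - gradient φ w₂‖ ≤ C * ‖w₁ - w₂‖)
    (h : ℝ → ℝ)
    (hh : ∀ r : ℝ, h r = Real.log (ε + τ * Real.log (1 + Real.exp (r / τ))))
    (fμ : Measure (EuclideanSpace ℝ (Fin d)) → EuclideanSpace ℝ (Fin m) → ℝ)
    (hfμ : ∀ μ z, fμ μ z = ∫ y, φ (z - ξ y) ∂μ)
    (gradfμ : Measure (EuclideanSpace ℝ (Fin d)) → EuclideanSpace ℝ (Fin m) →
      EuclideanSpace ℝ (Fin m))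
    (hgradfμ : ∀ μ z, gradfμ μ z = ∫ y, gradient φ (z - ξ y) ∂μ)
    (b : EuclideanSpace ℝ (Fin d) → Measure (EuclideanSpace ℝ (Fin d)) →
      EuclideanSpace ℝ (Fin d))
    (hb : ∀ x μ, b x μ = -(γ⁻¹) •
      (gradient U x + (α / β) • ContinuousLinearMap.adjoint (fderiv ℝ ξ x)
        (deriv h (fμ μ (ξ x)) • gradfμ μ (ξ x)))) :
    ∃ C : ℝ, 0 < C ∧
      ∀ (x₁ x₂ : EuclideanSpace ℝ (Fin d))
        (μ₁ μ₂ : Measure (EuclideanSpace ℝ (Fin d))),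
        IsProbabilityMeasure μ₁ → IsProbabilityMeasure μ₂ →
        Integrable (fun y => ‖y‖ ^ 2) μ₁ → Integrable (fun y => ‖y‖ ^ 2) μ₂ →
        ∀ π : Measure (EuclideanSpace ℝ (Fin d) × EuclideanSpace ℝ (Fin d)),
          IsProbabilityMeasure π →
          π.map Prod.fst = μ₁ → π.map Prod.snd = μ₂ →
          Integrable (fun p => ‖p.1 - p.2‖ ^ 2) π →
          ‖b x₁ μ₁ - b x₂ μ₂‖
            ≤ C * (‖x₁ - x₂‖ + Real.sqrt (∫ p, ‖p.1 - p.2‖ ^ 2 ∂π)) := by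
  obtain ⟨LU, hU_lip⟩ := hU_lip
  obtain ⟨M, hξ_bdd⟩ := hξ_bdd
  obtain ⟨LDξ, hξ_lip⟩ := hξ_lip
  obtain ⟨Cg, hφ_grad_bdd⟩ := hφ_grad_bdd
  obtain ⟨Lg, hφ_grad_lip⟩ := hφ_grad_lip
  have hh' : deriv h = deriv fun r => Real.log (softplusRegularizer ε τ r) :=
    congrArg deriv (funext hh)
  have hξL := lipschitzWith_of_norm_fderiv_le (hξ.differentiable (by norm_num)) hξ_bdd
  have hφL := lipschitzWith_of_norm_gradient_le (hφ.differentiable (by norm_num)) hφ_grad_bdd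
  set C := |γ⁻¹| * (LU.toNNReal + |α / β| * (LDξ.toNNReal * (ε⁻¹ * Cg) + M *
    ((τ⁻¹ / ε + 1 / ε ^ 2).toNNReal * (Cg.toNNReal * M.toNNReal) * Cg
      + ε⁻¹ * (Lg.toNNReal * M.toNNReal))))
  refine ⟨max C 1, by positivity, fun x₁ x₂ μ₁ μ₂ _ _ _ _ π _ h₁ h₂ hπ => ?_⟩
  set T := ‖x₁ - x₂‖ + √(∫ p, ‖p.1 - p.2‖ ^ 2 ∂π)
  have hd : MemLp (fun p => ‖p.1 - p.2‖) 2 π := (memLp_two_iff_integrable_sq (by fun_prop)).2 hπ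
  have hxT : ‖x₁ - x₂‖ ≤ T := le_add_of_nonneg_right (Real.sqrt_nonneg _)
  have hf : ‖fμ μ₁ (ξ x₁) - fμ μ₂ (ξ x₂)‖ ≤ Cg.toNNReal * M.toNNReal * T := by
    simpa only [hfμ] using norm_integral_comp_sub_sub_le_sqrt_of_coupling h₁ h₂ hd hφL
      (by simpa only [Real.norm_eq_abs] using hφ_bdd) hξL x₁ x₂
  have hv : ‖gradfμ μ₁ (ξ x₁) - gradfμ μ₂ (ξ x₂)‖ ≤ Lg.toNNReal * M.toNNReal * T := by
    simpa only [hgradfμ] using norm_integral_comp_sub_sub_le_sqrt_of_coupling h₁ h₂ hd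
      (.of_norm_sub_le' hφ_grad_lip) ⟨Cg, hφ_grad_bdd⟩ hξL x₁ x₂
  have hv₁ : ‖gradfμ μ₁ (ξ x₁)‖ ≤ Cg := by
    simpa [hgradfμ] using norm_integral_le_of_norm_le_const (μ := μ₁)
      (ae_of_all _ fun y => hφ_grad_bdd (ξ x₁ - ξ y))
  have hs : |deriv h (fμ μ₁ (ξ x₁)) - deriv h (fμ μ₂ (ξ x₂))|
      ≤ (τ⁻¹ / ε + 1 / ε ^ 2).toNNReal * (Cg.toNNReal * M.toNNReal) * T := by
    rw [← Real.norm_eq_abs, mul_assoc, hh']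
    exact (lipschitzWith_deriv_log_softplusRegularizer hε hτ).norm_sub_le_of_le hf
  rw [hb, hb]
  calc _ ≤ C * T := norm_drift_sub_le _ _ _ _ _ _ _ _ _ _
        ((LipschitzWith.of_norm_sub_le' hU_lip).norm_sub_le_of_le hxT)
        ((LipschitzWith.of_norm_sub_le' hξ_lip).norm_sub_le_of_le hxT) (hξ_bdd x₂)
        (hh' ▸ abs_deriv_log_softplusRegularizer_le hε hτ _)
        (hh' ▸ abs_deriv_log_softplusRegularizer_le hε hτ _) hs hv₁ hv
    _ ≤ max C 1 * T := by gcongr; exact le_max_left _ _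

/-- **Lemma 1, Lipschitz part, coupling form.** Under the regularity
assumptions on `U`, `ξ`, `φ` and the Softplus regularizer `h = log ∘ K_{τ,ε}`, the drift
`b(x, μ) = −γ⁻¹ [∇U(x) + (α/β) ∇ξ(x)ᵀ h'(f_μ(ξ(x))) ∇f_μ(ξ(x))]` of the regularized
McKean–Vlasov dynamics satisfies: there exists `C > 0` such that for all `x₁, x₂`, all
probability measures `μ₁, μ₂` with finite second moment and every coupling `π` of
`μ₁, μ₂`, `‖b(x₁,μ₁) − b(x₂,μ₂)‖ ≤ C (‖x₁ − x₂‖ + (∫ ‖y₁ − y₂‖² dπ)^{1/2})`. -/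
theorem drift_lipschitz_coupling_form
    (d m : ℕ) (γ α β ε τ : ℝ)
    (hγ : 0 < γ) (hα : 0 < α) (hβ : 0 < β) (hε : 0 < ε) (hτ : 0 < τ)
    (U : EuclideanSpace ℝ (Fin d) → ℝ)
    (hU : Differentiable ℝ U)
    (hU_lip : ∃ L : ℝ, ∀ x₁ x₂, ‖gradient U x₁ - gradient U x₂‖ ≤ L * ‖x₁ - x₂‖)
    (ξ : EuclideanSpace ℝ (Fin d) → EuclideanSpace ℝ (Fin m))
    (hξ : ContDiff ℝ 2 ξ)
    (hξ_bdd : ∃ M : ℝ, ∀ x, ‖fderiv ℝ ξ x‖ ≤ M)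
    (hξ_lip : ∃ L : ℝ, ∀ x₁ x₂, ‖fderiv ℝ ξ x₁ - fderiv ℝ ξ x₂‖ ≤ L * ‖x₁ - x₂‖)
    (φ : EuclideanSpace ℝ (Fin m) → ℝ)
    (hφ : ContDiff ℝ 2 φ)
    (hφ_bdd : ∃ C : ℝ, ∀ w, |φ w| ≤ C)
    (hφ_grad_bdd : ∃ C : ℝ, ∀ w, ‖gradient φ w‖ ≤ C)
    (hφ_grad_lip : ∃ C : ℝ, ∀ w₁ w₂, ‖gradient φ w₁ - gradient φ w₂‖ ≤ C * ‖w₁ - w₂‖)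
    (h : ℝ → ℝ)
    (hh : ∀ r : ℝ, h r = Real.log (ε + τ * Real.log (1 + Real.exp (r / τ))))
    (fμ : Measure (EuclideanSpace ℝ (Fin d)) → EuclideanSpace ℝ (Fin m) → ℝ)
    (hfμ : ∀ μ z, fμ μ z = ∫ y, φ (z - ξ y) ∂μ)
    (gradfμ : Measure (EuclideanSpace ℝ (Fin d)) → EuclideanSpace ℝ (Fin m) →
      EuclideanSpace ℝ (Fin m))
    (hgradfμ : ∀ μ z, gradfμ μ z = ∫ y, gradient φ (z - ξ y) ∂μ)
    (b : EuclideanSpace ℝ (Fin d) → Measure (EuclideanSpace ℝ (Fin d)) →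
      EuclideanSpace ℝ (Fin d))
    (hb : ∀ x μ, b x μ = -(γ⁻¹) •
      (gradient U x + (α / β) • ContinuousLinearMap.adjoint (fderiv ℝ ξ x)
        (deriv h (fμ μ (ξ x)) • gradfμ μ (ξ x)))) :
    ∃ C : ℝ, 0 < C ∧
      ∀ (x₁ x₂ : EuclideanSpace ℝ (Fin d))
        (μ₁ μ₂ : Measure (EuclideanSpace ℝ (Fin d))),
        IsProbabilityMeasure μ₁ → IsProbabilityMeasure μ₂ →
        Integrable (fun y => ‖y‖ ^ 2) μ₁ → Integrable (fun y => ‖y‖ ^ 2) μ₂ →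
        ∀ π : Measure (EuclideanSpace ℝ (Fin d) × EuclideanSpace ℝ (Fin d)),
          IsProbabilityMeasure π →
          π.map Prod.fst = μ₁ → π.map Prod.snd = μ₂ →
          Integrable (fun p => ‖p.1 - p.2‖ ^ 2) π →
          ‖b x₁ μ₁ - b x₂ μ₂‖
            ≤ C * (‖x₁ - x₂‖ + Real.sqrt (∫ p, ‖p.1 - p.2‖ ^ 2 ∂π)) :=
  drift_lipschitz_coupling_form_general d m γ α β ε τ hε hτ U hU_lip ξ hξ hξ_bdd hξ_lip φ hφ hφ_bdd
    hφ_grad_bdd hφ_grad_lip h hh fμ hfμ gradfμ hgradfμ b hb
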